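/- arXiv:1211.1004 — 4 statements merged into one kernel-verified Lean document; each statement's English description precedes it below -/
import Mathlib

section
/- Every formal power series in n variables over a commutative ring B with constant term 1 can be written uniquely as a (convergent) product over all nonzero multi-indices I in Z_{\geq 0}^n of factors (1 - a_I t^I) with a_I in B. -/
/-!
Comparing coefficients at a multi-index `M ≠ 0`, the factor `1 - a_M t^M` contributes `-a_M`
and all other factors `1 - a_I t^I` that matter have `I < M`, so
`coeff_M (∏ (1 - a_I t^I)) = coeff_M (∏_{0 < I < M} (1 - a_I t^I)) - a_M`.
Hence `a_M` is forced, and may be chosen, by well-founded recursion on `M`.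
-/

open Finset

/-- The (convergent) infinite product `∏_{I ∈ ℤ_{≥0}^n - 0} (1 - a_I t^I)` in
`B[[t_1,…,t_n]]`: its coefficient at a multi-index `M` agrees with the coefficient at `M`
of the finite partial product over the nonzero multi-indices `I ≤ M`, since factors with
`I ≰ M` do not contribute in degree `M`. -/
noncomputable def wittFactorProd {n : ℕ} {B : Type*} [CommRing B]
    (a : (Fin n →₀ ℕ) → B) : MvPowerSeries (Fin n) B :=
  fun M => MvPowerSeries.coeff (R := B) M
    (∏ I ∈ (Finset.Iic M).erase 0, (1 - MvPowerSeries.monomial (R := B) I (a I)))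

open MvPowerSeries

namespace MvPowerSeries

variable {σ R : Type*} [CommRing R]

theorem constantCoeff_prod_one_sub_monomial (a : (σ →₀ ℕ) → R) {S : Finset (σ →₀ ℕ)}
    (hS : 0 ∉ S) : constantCoeff (∏ I ∈ S, (1 - monomial I (a I))) = 1 := by
  rw [map_prod]
  refine Finset.prod_eq_one fun I hI => ?_
  rw [map_sub, map_one, ← coeff_zero_eq_constantCoeff_apply,
    coeff_monomial_ne (ne_of_mem_of_not_mem hI hS).symm, sub_zero]

theorem coeff_one_sub_monomial_mul_self (M : σ →₀ ℕ) (c : R) (p : MvPowerSeries σ R) :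
    coeff M ((1 - monomial M c) * p) = coeff M p - c * constantCoeff p := by
  rw [sub_mul, one_mul, map_sub, coeff_monomial_mul, if_pos le_rfl, tsub_self,
    coeff_zero_eq_constantCoeff_apply]

end MvPowerSeries

section WittFactorProd

variable {n : ℕ} {B : Type*} [CommRing B]

theorem coeff_wittFactorProd (a : (Fin n →₀ ℕ) → B) (M : Fin n →₀ ℕ) :
    coeff M (wittFactorProd a) = coeff M (∏ I ∈ (Iic M).erase 0, (1 - monomial I (a I))) :=
  rfl

theorem constantCoeff_wittFactorProd (a : (Fin n →₀ ℕ) → B) :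
    constantCoeff (wittFactorProd a) = 1 := by
  rw [← coeff_zero_eq_constantCoeff_apply, coeff_wittFactorProd, ← bot_eq_zero, Iic_bot,
    erase_singleton, prod_empty]
  exact coeff_zero_one

theorem coeff_wittFactorProd_of_ne_zero (a : (Fin n →₀ ℕ) → B) {M : Fin n →₀ ℕ} (hM : M ≠ 0) :
    coeff M (wittFactorProd a)
      = coeff M (∏ I ∈ (Iio M).erase 0, (1 - monomial I (a I))) - a M := by
  have hIic : (Iic M).erase 0 = insert M ((Iio M).erase 0) := by
    rw [← Iio_insert, erase_insert_of_ne hM]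
  have hM_notMem : M ∉ (Iio M).erase 0 := fun h => notMem_Iio_self (mem_of_mem_erase h)
  rw [coeff_wittFactorProd, hIic, prod_insert hM_notMem, coeff_one_sub_monomial_mul_self,
    constantCoeff_prod_one_sub_monomial a (notMem_erase _ _), mul_one]

noncomputable def wittFactorCoeff (f : MvPowerSeries (Fin n) B) : (Fin n →₀ ℕ) → B
  | M =>
    if M = 0 then 0 else
      coeff M (∏ I ∈ ((Iio M).erase 0).attach, (1 - monomial I.1 (wittFactorCoeff f I.1)))
        - coeff M f
  termination_by M => M
  decreasing_by exact mem_Iio.mp (mem_of_mem_erase I.2)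

theorem wittFactorCoeff_zero (f : MvPowerSeries (Fin n) B) : wittFactorCoeff f 0 = 0 := by
  rw [wittFactorCoeff, if_pos rfl]

theorem wittFactorCoeff_of_ne_zero (f : MvPowerSeries (Fin n) B) {M : Fin n →₀ ℕ} (hM : M ≠ 0) :
    wittFactorCoeff f M
      = coeff M (∏ I ∈ (Iio M).erase 0, (1 - monomial I (wittFactorCoeff f I))) - coeff M f := by
  rw [wittFactorCoeff, if_neg hM,
    prod_attach ((Iio M).erase 0) fun I => 1 - monomial I (wittFactorCoeff f I)]

theorem wittFactorProd_wittFactorCoeff {f : MvPowerSeries (Fin n) B}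
    (hf : constantCoeff f = 1) : wittFactorProd (wittFactorCoeff f) = f := by
  ext M
  by_cases hM : M = 0
  · rw [hM, coeff_zero_eq_constantCoeff_apply, coeff_zero_eq_constantCoeff_apply,
      constantCoeff_wittFactorProd, hf]
  · rw [coeff_wittFactorProd_of_ne_zero _ hM, wittFactorCoeff_of_ne_zero f hM]
    ring

theorem eq_of_wittFactorProd_eq {a b : (Fin n →₀ ℕ) → B} (ha : a 0 = 0) (hb : b 0 = 0)
    (hab : wittFactorProd a = wittFactorProd b) : a = b := by
  funext M
  induction M using WellFoundedLT.induction with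
  | _ M ih =>
    by_cases hM : M = 0
    · rw [hM, ha, hb]
    · have hpartial : ∏ I ∈ (Iio M).erase 0, (1 - monomial I (a I))
          = ∏ I ∈ (Iio M).erase 0, (1 - monomial I (b I)) :=
        prod_congr rfl fun I hI => by rw [ih I (mem_Iio.mp (mem_of_mem_erase hI))]
      have hcoeff := congrArg (coeff M) hab
      rw [coeff_wittFactorProd_of_ne_zero a hM, coeff_wittFactorProd_of_ne_zero b hM,
        hpartial] at hcoeff
      exact sub_right_injective hcoeff

end WittFactorProd

/-- Every formal power series in `n` variables over a commutative ring `B` with constant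
term `1` can be written uniquely as a product over all nonzero multi-indices
`I ∈ ℤ_{≥0}^n - 0` of factors `(1 - a_I t^I)` with `a_I ∈ B`. -/
theorem unique_product_decomposition {n : ℕ} {B : Type*} [CommRing B]
    (f : MvPowerSeries (Fin n) B) (hf : MvPowerSeries.constantCoeff (σ := Fin n) (R := B) f = 1) :
    ∃! a : (Fin n →₀ ℕ) → B, a 0 = 0 ∧ wittFactorProd a = f :=
  ⟨wittFactorCoeff f, ⟨wittFactorCoeff_zero f, wittFactorProd_wittFactorCoeff hf⟩,
    fun _ ⟨hb0, hbf⟩ => eq_of_wittFactorProd_eq hb0 (wittFactorCoeff_zero f)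
      (hbf.trans (wittFactorProd_wittFactorCoeff hf).symm)⟩
end

section
/- Every formal power series in one variable over a commutative ring B with constant term 1 can be written uniquely as a product over m >= 1 of factors (1 - a_m t^m) with a_m in B. -/
/-!
Expanding `∏_{m ≤ d+1} (1 - a_m t^m)` in degree `d + 1`, the last factor contributes exactly
`-a_{d+1}`, and everything else depends only on `a_1, …, a_d`. So matching the coefficient of
`t^(d+1)` with that of `f` determines `a_{d+1}` uniquely from the earlier `a_m`, and the
coefficients are obtained by strong recursion.
-/

open Finset

noncomputable def wittProdOne {B : Type*} [CommRing B] (a : ℕ → B) : PowerSeries B :=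
  PowerSeries.mk fun d => PowerSeries.coeff (R := B) d
    (∏ m ∈ Finset.Icc 1 d, (1 - PowerSeries.monomial (R := B) m (a m)))

open PowerSeries

section

variable {B : Type*} [CommRing B]

theorem PowerSeries.coeff_mul_monomial_self (p : B⟦X⟧) (n : ℕ) (r : B) :
    coeff n (p * monomial n r) = constantCoeff p * r := by
  have hmon : monomial n r = C r * X ^ n := by
    ext j
    rw [coeff_monomial, coeff_C_mul_X_pow]
  simpa [hmon, ← mul_assoc] using coeff_mul_X_pow (p * C r) n 0

theorem constantCoeff_prod_one_sub_monomial (c : ℕ → B) {s : Finset ℕ} (hs : 0 ∉ s) :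
    constantCoeff (∏ m ∈ s, (1 - monomial m (c m))) = 1 := by
  rw [map_prod]
  refine prod_eq_one fun m hm => ?_
  rw [map_sub, map_one, ← coeff_zero_eq_constantCoeff_apply, coeff_monomial,
    if_neg (ne_of_mem_of_not_mem hm hs).symm, sub_zero]

theorem constantCoeff_wittProdOne (a : ℕ → B) : constantCoeff (wittProdOne a) = 1 := by
  rw [← coeff_zero_eq_constantCoeff_apply, wittProdOne, coeff_mk, Icc_eq_empty_of_lt zero_lt_one,
    prod_empty, coeff_zero_one]

theorem coeff_succ_wittProdOne (a : ℕ → B) (d : ℕ) :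
    coeff (d + 1) (wittProdOne a) =
      coeff (d + 1) (∏ m ∈ Icc 1 d, (1 - monomial m (a m))) - a (d + 1) := by
  rw [wittProdOne, coeff_mk, prod_Icc_succ_top (Nat.le_add_left 1 d), mul_sub, mul_one, map_sub,
    coeff_mul_monomial_self, constantCoeff_prod_one_sub_monomial a (by simp), one_mul]

theorem eq_of_wittProdOne_eq {a b : ℕ → B} (h₀ : a 0 = b 0) (h : wittProdOne a = wittProdOne b) :
    a = b := by
  funext d
  induction d using Nat.strong_induction_on with
  | _ d ih =>
    cases d with
    | zero => exact h₀
    | succ d =>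
      have hprod : ∏ m ∈ Icc 1 d, (1 - monomial m (a m)) = ∏ m ∈ Icc 1 d, (1 - monomial m (b m)) :=
        prod_congr rfl fun m hm => by rw [ih m (Nat.lt_succ_of_le (mem_Icc.mp hm).2)]
      have hcoeff := congrArg (coeff (d + 1)) h
      rw [coeff_succ_wittProdOne, coeff_succ_wittProdOne, hprod] at hcoeff
      exact sub_right_injective hcoeff

noncomputable def wittProdOneInv (f : B⟦X⟧) : ℕ → B
  | 0 => 0
  | d + 1 => coeff (d + 1) (∏ m ∈ (Icc 1 d).attach, (1 - monomial m.1 (wittProdOneInv f m.1)))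
      - coeff (d + 1) f
  decreasing_by have := (mem_Icc.mp m.2).2; omega

theorem wittProdOneInv_zero (f : B⟦X⟧) : wittProdOneInv f 0 = 0 := by
  rw [wittProdOneInv]

theorem wittProdOneInv_succ (f : B⟦X⟧) (d : ℕ) :
    wittProdOneInv f (d + 1) =
      coeff (d + 1) (∏ m ∈ Icc 1 d, (1 - monomial m (wittProdOneInv f m))) - coeff (d + 1) f := by
  rw [wittProdOneInv, prod_attach (Icc 1 d) fun m => 1 - monomial m (wittProdOneInv f m)]

theorem wittProdOne_wittProdOneInv {f : B⟦X⟧} (hf : constantCoeff f = 1) :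
    wittProdOne (wittProdOneInv f) = f := by
  ext d
  cases d with
  | zero => rw [coeff_zero_eq_constantCoeff_apply, coeff_zero_eq_constantCoeff_apply,
      constantCoeff_wittProdOne, hf]
  | succ d => rw [coeff_succ_wittProdOne, wittProdOneInv_succ, sub_sub_cancel]

end

/-- Every formal power series in one variable over a commutative ring `B` with constant
term `1` can be written uniquely as a product over `m ≥ 1` of factors `(1 - a_m t^m)`
with `a_m ∈ B`. -/
theorem unique_product_decomposition_one_var {B : Type*} [CommRing B]
    (f : PowerSeries B) (hf : PowerSeries.constantCoeff (R := B) f = 1) :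
    ∃! a : ℕ → B, a 0 = 0 ∧ wittProdOne a = f :=
  ⟨wittProdOneInv f, ⟨wittProdOneInv_zero f, wittProdOne_wittProdOneInv hf⟩,
    fun _ ⟨ha₀, ha⟩ => eq_of_wittProdOne_eq (ha₀.trans (wittProdOneInv_zero f).symm)
      (ha.trans (wittProdOne_wittProdOneInv hf).symm)⟩
end

section
/- In one variable: the dual of the coalgebra R[[t]]^* (free R-module with basis b_i dual to t^i, comultiplication b_i -> sum_{j=0}^{i} b_j tensor b_{i-j}) has its free commutative Hopf algebra F(R[[t]]^*) isomorphic as an R-algebra to the polynomial ring R[b_1, b_2, ...], and R-algebra homomorphisms from it to a commutative R-algebra B are in natural bijection with power series in B[[t]] with constant term 1. -/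
namespace MvPolynomial

noncomputable def algHomEquivFun (σ R S : Type*) [CommSemiring R] [CommSemiring S]
    [Algebra R S] : (MvPolynomial σ R →ₐ[R] S) ≃ (σ → S) where
  toFun φ := φ ∘ X
  invFun := aeval
  left_inv φ := (aeval_unique φ).symm
  right_inv a := by ext; simp

end MvPolynomial

namespace PowerSeries

noncomputable def constantCoeffEqOneEquivFun (B : Type*) [Semiring B] :
    {f : B⟦X⟧ // constantCoeff f = 1} ≃ ({i : ℕ // 0 < i} → B) where
  toFun f i := coeff i.1 f.1
  invFun a := ⟨mk fun n => if h : 0 < n then a ⟨n, h⟩ else 1, by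
    rw [← coeff_zero_eq_constantCoeff_apply, coeff_mk, dif_neg (lt_irrefl 0)]⟩
  left_inv f := by
    ext n
    rcases Nat.eq_zero_or_pos n with rfl | hn
    · simp [f.2]
    · simp [hn]
  right_inv a := funext fun i => by simp [i.2]

theorem coeff_constantCoeffEqOneEquivFun_symm {B : Type*} [Semiring B]
    (a : {i : ℕ // 0 < i} → B) {i : ℕ} (hi : 0 < i) :
    coeff i ((constantCoeffEqOneEquivFun B).symm a).1 = a ⟨i, hi⟩ :=
  congrFun ((constantCoeffEqOneEquivFun B).apply_symm_apply a) ⟨i, hi⟩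

end PowerSeries

/-- The free commutative Hopf algebra `F(R[[t]]^*)` on the restricted dual coalgebra of
`R[[t]]` is, as an `R`-algebra, the polynomial ring `R[b_1, b_2, …]` (here
`MvPolynomial {i : ℕ // 0 < i} R`), and `R`-algebra homomorphisms from it to a
commutative `R`-algebra `B` are in natural bijection with power series in `B[[t]]` with
constant term `1`: there is an equivalence sending `φ` to the power series
`1 + ∑_{i ≥ 1} φ(b_i) t^i`. -/
theorem polynomial_ring_represents_power_series (R B : Type*) [CommRing R] [CommRing B]
    [Algebra R B] :
    ∃ e : (MvPolynomial {i : ℕ // 0 < i} R →ₐ[R] B) ≃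
        {f : PowerSeries B // PowerSeries.constantCoeff (R := B) f = 1},
      ∀ (φ : MvPolynomial {i : ℕ // 0 < i} R →ₐ[R] B) (i : ℕ) (hi : 0 < i),
        PowerSeries.coeff (R := B) i (e φ).1 = φ (MvPolynomial.X ⟨i, hi⟩) :=
  ⟨(MvPolynomial.algHomEquivFun _ R B).trans (PowerSeries.constantCoeffEqOneEquivFun B).symm,
    fun _ _ hi => PowerSeries.coeff_constantCoeffEqOneEquivFun_symm _ hi⟩
end

section
/- For a commutative ring B, the bijection between R-algebra maps R[b_1,b_2,...] -> B and power series 1 + sum_{i>=1} b_i t^i in B[[t]] intertwines the comultiplication b_i -> sum_{0<=j<=i} b_j tensor b_{i-j} (with b_0 = 1) with multiplication of power series; i.e., the Hopf algebra R[b_1,b_2,...] with this comultiplication represents the functor B -> (group of power series over B with constant term 1 under multiplication). -/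
open Finset TensorProduct

/-- The elements `b_i` of the Hopf algebra `R[b_1, b_2, …]`, with `b_0 = 1`. -/
noncomputable def bb (R : Type*) [CommRing R] (i : ℕ) : MvPolynomial {i : ℕ // 0 < i} R :=
  if h : 0 < i then MvPolynomial.X ⟨i, h⟩ else 1

/-- The comultiplication of the big Witt Hopf algebra: the `R`-algebra map determined by
`b_i ↦ ∑_{j=0}^{i} b_j ⊗ b_{i-j}` (with `b_0 = 1`). -/
noncomputable def wittComul (R : Type*) [CommRing R] :
    MvPolynomial {i : ℕ // 0 < i} R →ₐ[R]
      MvPolynomial {i : ℕ // 0 < i} R ⊗[R] MvPolynomial {i : ℕ // 0 < i} R :=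
  MvPolynomial.aeval fun i =>
    ∑ j ∈ Finset.range (i.1 + 1), bb R j ⊗ₜ[R] bb R (i.1 - j)

/-- The power series `1 + ∑_{i ≥ 1} φ(b_i) t^i` attached to an algebra map
`φ : R[b_1, b_2, …] → B`. -/
noncomputable def seriesOf {R B : Type*} [CommRing R] [CommRing B] [Algebra R B]
    (φ : MvPolynomial {i : ℕ // 0 < i} R →ₐ[R] B) : PowerSeries B :=
  PowerSeries.mk fun i => if h : 0 < i then φ (MvPolynomial.X ⟨i, h⟩) else 1

/-! The `n`-th coefficient of either side is `∑_{i + j = n} φ(b_i) ψ(b_j)`: on the left because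
`Δ b_n` is the Cauchy convolution of the `b_i`, on the right by the product formula for power
series. -/

lemma coeff_seriesOf {R B : Type*} [CommRing R] [CommRing B] [Algebra R B]
    (φ : MvPolynomial {i : ℕ // 0 < i} R →ₐ[R] B) (n : ℕ) :
    PowerSeries.coeff n (seriesOf φ) = φ (bb R n) := by
  simp only [seriesOf, PowerSeries.coeff_mk, bb]
  split <;> simp

lemma wittComul_bb (R : Type*) [CommRing R] (n : ℕ) :
    wittComul R (bb R n) = ∑ p ∈ antidiagonal n, bb R p.1 ⊗ₜ[R] bb R p.2 := by
  rw [Nat.sum_antidiagonal_eq_sum_range_succ fun i j => bb R i ⊗ₜ[R] bb R j]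
  rcases Nat.eq_zero_or_pos n with rfl | hn
  · simp [bb, Algebra.TensorProduct.one_def]
  · simp [bb, hn, wittComul]

/-- The bijection between `R`-algebra maps `R[b_1, b_2, …] → B` and power series with
constant term `1` intertwines the comultiplication `b_i ↦ ∑_{0 ≤ j ≤ i} b_j ⊗ b_{i-j}`
(with `b_0 = 1`) with multiplication of power series: the Hopf algebra `R[b_1, b_2, …]`
represents the functor `B ↦ (power series over B with constant term 1, under ×)`. -/
theorem wittComul_intertwines_mul {R B : Type*} [CommRing R] [CommRing B] [Algebra R B]
    (φ ψ : MvPolynomial {i : ℕ // 0 < i} R →ₐ[R] B) :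
    seriesOf ((Algebra.TensorProduct.productMap φ ψ).comp (wittComul R)) =
      seriesOf φ * seriesOf ψ := by
  ext n
  simp only [PowerSeries.coeff_mul, coeff_seriesOf, AlgHom.comp_apply, wittComul_bb, map_sum,
    Algebra.TensorProduct.productMap_apply_tmul]
end
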